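/- arXiv:2605.21828 — 5 statements merged into one kernel-verified Lean document; each statement's English description precedes it below -/
import Mathlib

section
/- Let k be a positive integer and let x > 0 be real. Then |J_k(x)| ≤ e^{ex/2 − k}, where J_k is the Bessel function of the first kind of order k and e is Euler's number. -/
/-- The Bessel function of the first kind of nonnegative integer order `n`,
defined by its everywhere-convergent power series. -/
noncomputable def besselJNat (n : ℕ) (x : ℝ) : ℝ :=
  ∑' q : ℕ, (-1 : ℝ) ^ q * (x / 2) ^ (2 * q + n) /
    ((q.factorial : ℝ) * ((q + n).factorial : ℝ))

/-- The Bessel function of the first kind of integer order. -/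
noncomputable def besselJ (n : ℤ) (x : ℝ) : ℝ :=
  if 0 ≤ n then besselJNat n.toNat x else (-1 : ℝ) ^ n * besselJNat (-n).toNat x

/-!
Integrating the power series termwise gives the integral representation
`π J₀(x) = ∫₀^π cos (x sin θ) dθ`, hence `|J₀| ≤ 1`, and the recurrence
`x^(n+1) J_(n+1)(x) = ∫₀^x t^(n+1) J_n(t) dt`, which propagates this bound to
`|J_n(x)| ≤ (x/2)^n / n!` for `x ≥ 0`. Finally `y^k / k! = e^(-k) (e y)^k / k! ≤ e^(e y - k)`.
-/

open Real Set
open scoped Nat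

theorem hasSum_intervalIntegral_of_norm_le {ι E : Type*} [Countable ι] [NormedAddCommGroup E]
    [NormedSpace ℝ E] {F : ι → ℝ → E} {f : ℝ → E} {M : ι → ℝ} {a b : ℝ}
    (hF : ∀ i, Continuous (F i)) (hM : Summable M) (hFM : ∀ i, ∀ t ∈ uIcc a b, ‖F i t‖ ≤ M i)
    (hf : ∀ t ∈ uIcc a b, HasSum (fun i => F i t) (f t)) :
    HasSum (fun i => ∫ t in a..b, F i t) (∫ t in a..b, f t) :=
  intervalIntegral.hasSum_integral_of_dominated_convergence (fun i _ => M i)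
    (fun i => (hF i).aestronglyMeasurable)
    (fun i => .of_forall fun t ht => hFM i t (uIoc_subset_uIcc ht))
    (.of_forall fun _ _ => hM) intervalIntegrable_const
    (.of_forall fun t ht => hf t (uIoc_subset_uIcc ht))

noncomputable def besselTerm (n : ℕ) (x : ℝ) (q : ℕ) : ℝ :=
  (-1 : ℝ) ^ q * (x / 2) ^ (2 * q + n) / ((q ! : ℝ) * ((q + n)! : ℝ))

@[simp]
theorem besselTerm_zero_right (n : ℕ) (x : ℝ) : besselTerm n x 0 = (x / 2) ^ n / n ! := by
  simp [besselTerm]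

theorem abs_besselTerm_le (n : ℕ) (x : ℝ) (q : ℕ) :
    |besselTerm n x q| ≤ (|x| / 2) ^ n * (((|x| / 2) ^ 2) ^ q / q !) := by
  rw [besselTerm, abs_div, abs_mul, abs_pow, abs_pow, abs_neg, abs_one, one_pow, one_mul, abs_div,
    abs_two, abs_of_nonneg (by positivity : (0 : ℝ) ≤ q ! * (q + n)!), mul_div_assoc', ← pow_mul,
    ← pow_add, add_comm n]
  gcongr
  exact le_mul_of_one_le_right (by positivity) (mod_cast (q + n).factorial_pos)

theorem hasSum_besselJNat (n : ℕ) (x : ℝ) : HasSum (besselTerm n x) (besselJNat n x) :=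
  (Summable.of_norm_bounded ((summable_pow_div_factorial _).mul_left _)
    (abs_besselTerm_le n x)).hasSum

theorem integral_sin_pow_even_eq_factorial (q : ℕ) :
    ∫ θ in 0..π, sin θ ^ (2 * q) = π * ((2 * q)! / (4 ^ q * (q ! : ℝ) ^ 2)) := by
  rw [integral_sin_pow_even]
  congr 1
  induction q with
  | zero => simp
  | succ k ih =>
    rw [Finset.prod_range_succ, ih, Nat.mul_succ, Nat.factorial_succ, Nat.factorial_succ,
      Nat.factorial_succ]
    push_cast
    field_simp
    ring

theorem integral_cos_series_term (x : ℝ) (q : ℕ) :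
    ∫ θ in 0..π, (-1) ^ q * (x * sin θ) ^ (2 * q) / (2 * q)! = π * besselTerm 0 x q := by
  have hterm : ∀ θ, (-1) ^ q * (x * sin θ) ^ (2 * q) / (2 * q)!
      = (-1) ^ q * x ^ (2 * q) / (2 * q)! * sin θ ^ (2 * q) := fun θ => by ring
  simp_rw [hterm]
  rw [intervalIntegral.integral_const_mul, integral_sin_pow_even_eq_factorial, besselTerm, add_zero,
    add_zero, div_pow, pow_mul, pow_mul]
  field_simp
  ring

theorem besselJNat_zero_eq_integral (x : ℝ) :
    π * besselJNat 0 x = ∫ θ in 0..π, cos (x * sin θ) := by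
  refine ((hasSum_besselJNat 0 x).mul_left π).unique ?_
  simp_rw [← integral_cos_series_term]
  refine hasSum_intervalIntegral_of_norm_le (fun q => by fun_prop) (hasSum_cosh |x|).summable
    (fun q θ _ => ?_) (fun θ _ => hasSum_cos _)
  rw [norm_div, norm_mul, norm_pow, norm_neg, norm_one, one_pow, one_mul, norm_pow,
    Real.norm_natCast, pow_mul, pow_mul, norm_mul, Real.norm_eq_abs, Real.norm_eq_abs]
  gcongr
  exact mul_le_of_le_one_right (abs_nonneg x) (abs_sin_le_one θ)

theorem abs_besselJNat_zero_le_one (x : ℝ) : |besselJNat 0 x| ≤ 1 := by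
  have h := intervalIntegral.norm_integral_le_of_norm_le_const (a := 0) (b := π) (C := 1)
    (f := fun θ => cos (x * sin θ)) fun θ _ => abs_cos_le_one _
  rw [← besselJNat_zero_eq_integral, norm_mul, Real.norm_of_nonneg pi_pos.le, sub_zero,
    abs_of_pos pi_pos, one_mul] at h
  exact (mul_le_iff_le_one_right pi_pos).mp h

theorem integral_pow_mul_besselTerm (n : ℕ) (x : ℝ) (q : ℕ) :
    ∫ t in 0..x, t ^ (n + 1) * besselTerm n t q = x ^ (n + 1) * besselTerm (n + 1) x q := by
  have hterm : ∀ t : ℝ, t ^ (n + 1) * besselTerm n t q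
      = (-1) ^ q / (2 ^ (2 * q + n) * (q ! * (q + n)!)) * t ^ (2 * q + 2 * n + 1) := fun t => by
    rw [besselTerm, div_pow]; ring
  simp_rw [hterm]
  rw [intervalIntegral.integral_const_mul, integral_pow, besselTerm,
    zero_pow (Nat.succ_ne_zero _), sub_zero, ← add_assoc q n 1, Nat.factorial_succ, div_pow]
  push_cast
  field_simp
  ring

theorem pow_succ_mul_besselJNat_succ (n : ℕ) (x : ℝ) :
    x ^ (n + 1) * besselJNat (n + 1) x = ∫ t in 0..x, t ^ (n + 1) * besselJNat n t := by
  refine ((hasSum_besselJNat (n + 1) x).mul_left _).unique ?_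
  simp_rw [← integral_pow_mul_besselTerm]
  have hM := ((summable_pow_div_factorial ((|x| / 2) ^ 2)).mul_left ((|x| / 2) ^ n)).mul_left
    (|x| ^ (n + 1))
  refine hasSum_intervalIntegral_of_norm_le (fun q => by unfold besselTerm; fun_prop) hM
    (fun q t ht => ?_) (fun t _ => (hasSum_besselJNat n t).mul_left _)
  have htx : |t| ≤ |x| := by simpa using abs_sub_left_of_mem_uIcc ht
  rw [norm_mul, norm_pow, Real.norm_eq_abs, Real.norm_eq_abs]
  grw [abs_besselTerm_le]
  gcongr

theorem abs_besselJNat_le {x : ℝ} (hx : 0 ≤ x) (n : ℕ) :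
    |besselJNat n x| ≤ (x / 2) ^ n / n ! := by
  induction n generalizing x with
  | zero => simpa using abs_besselJNat_zero_le_one x
  | succ n ih =>
    rcases hx.eq_or_lt with rfl | hx
    · simp [besselJNat]
    -- The majorant `t ^ (n + 1) * (t / 2) ^ n / n !` is the `q = 0` instance of the integrand
    -- of `integral_pow_mul_besselTerm`, so its integral is known.
    have hbound : ‖∫ t in 0..x, t ^ (n + 1) * besselJNat n t‖
        ≤ ∫ t in 0..x, t ^ (n + 1) * besselTerm n t 0 := by
      refine intervalIntegral.norm_integral_le_of_norm_le hx.le (.of_forall fun t ht => ?_)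
        (Continuous.intervalIntegrable (by unfold besselTerm; fun_prop) _ _)
      rw [norm_mul, norm_pow, Real.norm_of_nonneg ht.1.le, besselTerm_zero_right]
      exact mul_le_mul_of_nonneg_left (ih ht.1.le) (pow_nonneg ht.1.le _)
    rw [← pow_succ_mul_besselJNat_succ, integral_pow_mul_besselTerm, besselTerm_zero_right,
      norm_mul, norm_pow, Real.norm_of_nonneg hx.le] at hbound
    exact le_of_mul_le_mul_left hbound (pow_pos hx _)

theorem pow_div_factorial_le_exp_exp_one_mul_sub {y : ℝ} (hy : 0 ≤ y) (k : ℕ) :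
    y ^ k / k ! ≤ exp (exp 1 * y - k) := by
  have h := pow_div_factorial_le_exp _ (mul_nonneg (exp_pos 1).le hy) k
  rw [mul_pow, ← exp_nat_mul, mul_one, mul_div_assoc, ← le_div_iff₀' (exp_pos _)] at h
  rwa [exp_sub]

theorem stmt1_general (k : ℕ) (x : ℝ) (hx : 0 < x) :
    |besselJ k x| ≤ Real.exp (Real.exp 1 * x / 2 - k) := by
  rw [besselJ, if_pos (Int.natCast_nonneg k), Int.toNat_natCast, mul_div_assoc]
  exact (abs_besselJNat_le hx.le k).trans
    (pow_div_factorial_le_exp_exp_one_mul_sub (by positivity) k)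

theorem stmt1 (k : ℕ) (hk : 0 < k) (x : ℝ) (hx : 0 < x) :
    |besselJ k x| ≤ Real.exp (Real.exp 1 * x / 2 - k) :=
  stmt1_general k x hx
end

section
/- (Ball-to-ball rank bound for the 2D Fourier kernel.) There exists an absolute constant C > 0 such that for all reals b > 0, R > 0, and 0 < ε < 1, there exist a natural number r with r ≤ C·(bR + log(1/ε) + 1)^2 and functions u_1,…,u_r : ℝ² → ℂ and v_1,…,v_r : ℝ² → ℂ such that for every x ∈ ℝ² with ‖x‖ ≤ R and every ω ∈ ℝ² with ‖ω‖ ≤ b, one has |e^{i ω·x} − Σ_{ℓ=1}^r u_ℓ(x)·conj(v_ℓ(ω))| ≤ ε. -/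
/-!
Truncate the Taylor series of `exp (i t)` at `t = ⟪ω, x⟫` after `n` terms. Since `|t| ≤ bR`, the
tail is at most `2 e^{2bR} / 2^n` once `n ≥ 2bR`, which is `≤ ε` for `n ≍ bR + log (1/ε)`. Each
retained power `⟪ω, x⟫^k = (x₀ω₀ + x₁ω₁)^k` is separated by the binomial theorem into `k + 1`
products of a monomial in `x` and a monomial in `ω`, so `n²` separable terms suffice.
-/

open Finset Complex
open scoped Nat InnerProductSpace

theorem norm_exp_sub_sum_range_le {z : ℂ} {n : ℕ} (hz : 2 * ‖z‖ ≤ n + 1) :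
    ‖exp z - ∑ m ∈ range n, z ^ m / (m ! : ℂ)‖ ≤ 2 * Real.exp (2 * ‖z‖) / 2 ^ n := by
  have hz' : ‖z‖ / n.succ ≤ 1 / 2 := by
    rw [div_le_iff₀ (by positivity)]; push_cast; linarith
  calc ‖exp z - ∑ m ∈ range n, z ^ m / (m ! : ℂ)‖ ≤ ‖z‖ ^ n / n ! * 2 := exp_bound' hz'
    _ = 2 * ((2 * ‖z‖) ^ n / n !) / 2 ^ n := by rw [mul_pow]; field_simp
    _ ≤ 2 * Real.exp (2 * ‖z‖) / 2 ^ n := by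
      gcongr; exact Real.pow_div_factorial_le_exp _ (by positivity) n

section SeparableTaylor

variable {n : ℕ}

/- The index `p = (k, j)` stands for the term `x₀ʲ x₁ᵏ⁻ʲ ω₀ʲ ω₁ᵏ⁻ʲ` of `(i⟪ω, x⟫)ᵏ / k!`; the
pairs with `j > k` carry the coefficient `k.choose j = 0`, which also neutralises the truncated
subtraction `k - j`. -/
noncomputable def taylorFactorLeft (n : ℕ) (p : Fin n × Fin n) (x : EuclideanSpace ℝ (Fin 2)) : ℂ :=
  I ^ (p.1 : ℕ) / (p.1 : ℕ)! * (p.1 : ℕ).choose p.2 * x 0 ^ (p.2 : ℕ) * x 1 ^ (p.1 - p.2 : ℕ)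

noncomputable def taylorFactorRight (n : ℕ) (p : Fin n × Fin n) (ω : EuclideanSpace ℝ (Fin 2)) :
    ℂ :=
  ω 0 ^ (p.2 : ℕ) * ω 1 ^ (p.1 - p.2 : ℕ)

theorem ofReal_inner_pow_eq_sum_range (x ω : EuclideanSpace ℝ (Fin 2)) {k : ℕ} (hk : k < n) :
    ((⟪ω, x⟫_ℝ : ℝ) : ℂ) ^ k =
      ∑ j ∈ range n, (x 0 * ω 0 : ℂ) ^ j * (x 1 * ω 1 : ℂ) ^ (k - j) * k.choose j := by
  have hinner : ((⟪ω, x⟫_ℝ : ℝ) : ℂ) = x 0 * ω 0 + x 1 * ω 1 := by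
    simp [PiLp.inner_apply, Fin.sum_univ_two]
  rw [hinner, add_pow]
  refine sum_subset (range_subset_range.mpr hk) fun j _ hj => ?_
  rw [Nat.choose_eq_zero_of_lt (by simpa using hj)]
  simp

theorem sum_range_exp_taylor_inner_eq_sum (x ω : EuclideanSpace ℝ (Fin 2)) :
    ∑ k ∈ range n, (I * (⟪ω, x⟫_ℝ : ℝ)) ^ k / k ! =
      ∑ p : Fin n × Fin n, taylorFactorLeft n p x * starRingEnd ℂ (taylorFactorRight n p ω) := by
  rw [Fintype.sum_prod_type, ← Fin.sum_univ_eq_sum_range]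
  refine Fintype.sum_congr _ _ fun k => ?_
  rw [mul_pow, ofReal_inner_pow_eq_sum_range x ω k.isLt, mul_sum, sum_div,
    ← Fin.sum_univ_eq_sum_range]
  refine Fintype.sum_congr _ _ fun j => ?_
  simp only [taylorFactorLeft, taylorFactorRight, map_mul, map_pow, conj_ofReal]
  ring

end SeparableTaylor

section TaylorDegree

variable {a L : ℝ}

/- Chosen so that `2a + L + 1 ≤ n log 2`, i.e. `2 e^{2a} / 2ⁿ ≤ e^{-L}`. -/
noncomputable def taylorDegree (a L : ℝ) : ℕ := ⌈(2 * a + L + 1) / Real.log 2⌉₊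

theorem add_le_taylorDegree_mul_log_two : 2 * a + L + 1 ≤ taylorDegree a L * Real.log 2 :=
  (div_le_iff₀ (Real.log_pos one_lt_two)).mp (Nat.le_ceil _)

theorem two_mul_add_one_le_taylorDegree (hL : 0 ≤ L) : 2 * a ≤ taylorDegree a L + 1 := by
  have hlog : (taylorDegree a L : ℝ) * Real.log 2 ≤ taylorDegree a L :=
    mul_le_of_le_one_right (Nat.cast_nonneg _) (by linarith [Real.log_two_lt_d9])
  linarith [add_le_taylorDegree_mul_log_two (a := a) (L := L)]

theorem taylorDegree_le (ha : 0 ≤ a) (hL : 0 ≤ L) : (taylorDegree a L : ℝ) ≤ 5 * (a + L + 1) := by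
  have hceil := Nat.ceil_lt_add_one (a := (2 * a + L + 1) / Real.log 2) (by positivity)
  have hdiv : (2 * a + L + 1) / Real.log 2 ≤ 2 * (2 * a + L + 1) := by
    rw [div_le_iff₀ (Real.log_pos one_lt_two)]
    nlinarith [Real.log_two_gt_d9]
  rw [taylorDegree]
  linarith

theorem two_mul_exp_div_two_pow_taylorDegree_le :
    2 * Real.exp (2 * a) / 2 ^ taylorDegree a L ≤ Real.exp (-L) := by
  have hpow : (2 : ℝ) ^ taylorDegree a L = Real.exp (taylorDegree a L * Real.log 2) := by
    rw [Real.exp_nat_mul, Real.exp_log two_pos]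
  rw [hpow, div_le_iff₀ (Real.exp_pos _), ← Real.exp_add]
  calc 2 * Real.exp (2 * a) ≤ Real.exp 1 * Real.exp (2 * a) := by
        gcongr; linarith [Real.add_one_le_exp 1]
    _ = Real.exp (1 + 2 * a) := (Real.exp_add _ _).symm
    _ ≤ Real.exp (-L + taylorDegree a L * Real.log 2) := by
        rw [Real.exp_le_exp]; linarith [add_le_taylorDegree_mul_log_two (a := a) (L := L)]

end TaylorDegree

theorem stmt2 :
    ∃ C : ℝ, 0 < C ∧
      ∀ b R ε : ℝ, 0 < b → 0 < R → 0 < ε → ε < 1 →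
        ∃ r : ℕ, (r : ℝ) ≤ C * (b * R + Real.log (1 / ε) + 1) ^ 2 ∧
          ∃ u v : Fin r → EuclideanSpace ℝ (Fin 2) → ℂ,
            ∀ x ω : EuclideanSpace ℝ (Fin 2), ‖x‖ ≤ R → ‖ω‖ ≤ b →
              ‖Complex.exp (Complex.I * (⟪ω, x⟫_ℝ : ℝ)) -
                ∑ ℓ : Fin r, u ℓ x * (starRingEnd ℂ) (v ℓ ω)‖ ≤ ε := by
  refine ⟨25, by norm_num, fun b R ε hb hR hε hε1 => ?_⟩
  have hL : 0 ≤ Real.log (1 / ε) := Real.log_nonneg (one_le_one_div hε hε1.le)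
  set n := taylorDegree (b * R) (Real.log (1 / ε))
  refine ⟨n * n, ?_, fun ℓ => taylorFactorLeft n (finProdFinEquiv.symm ℓ),
    fun ℓ => taylorFactorRight n (finProdFinEquiv.symm ℓ), fun x ω hx hω => ?_⟩
  · have hn := taylorDegree_le (mul_pos hb hR).le hL
    push_cast
    nlinarith [(Nat.cast_nonneg n : (0 : ℝ) ≤ n)]
  have hz : ‖I * (⟪ω, x⟫_ℝ : ℂ)‖ ≤ b * R := by
    rw [norm_mul, norm_I, one_mul, norm_real, Real.norm_eq_abs]
    exact (abs_real_inner_le_norm ω x).trans (mul_le_mul hω hx (norm_nonneg x) hb.le)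
  rw [Equiv.sum_comp finProdFinEquiv.symm
    (fun p => taylorFactorLeft n p x * starRingEnd ℂ (taylorFactorRight n p ω)),
    ← sum_range_exp_taylor_inner_eq_sum]
  calc _ ≤ 2 * Real.exp (2 * ‖I * (⟪ω, x⟫_ℝ : ℂ)‖) / 2 ^ n :=
        norm_exp_sub_sum_range_le (by linarith [two_mul_add_one_le_taylorDegree (a := b * R) hL])
    _ ≤ 2 * Real.exp (2 * (b * R)) / 2 ^ n := by gcongr
    _ ≤ Real.exp (-Real.log (1 / ε)) := two_mul_exp_div_two_pow_taylorDegree_le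
    _ = ε := by rw [one_div, Real.log_inv, neg_neg, Real.exp_log hε]
end

section
/- Let k and ℓ be nonnegative integers and let x > 0 be real. Then (x/2)^{ℓ+2k} / ((ℓ+k)! · k!) ≤ e^{e·x − ℓ − 2k}, where e is Euler's number. -/
lemma pow_div_fact_le_exp (y : ℝ) (hy : 0 ≤ y) (n : ℕ) :
    y ^ n / n.factorial ≤ Real.exp y :=
  calc y ^ n / n.factorial
      ≤ ∑ i ∈ Finset.range (n + 1), y ^ i / i.factorial :=
        Finset.single_le_sum (f := fun i => y ^ i / (i.factorial : ℝ))
          (fun i _ => by positivity) (Finset.self_mem_range_succ n)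
    _ ≤ Real.exp y := Real.sum_le_exp_of_nonneg hy _

theorem stmt5 (k ℓ : ℕ) (x : ℝ) (hx : 0 < x) :
    (x / 2) ^ (ℓ + 2 * k) / (((ℓ + k).factorial : ℝ) * (k.factorial : ℝ)) ≤
      Real.exp (Real.exp 1 * x - ℓ - 2 * k) := by
  set n := ℓ + 2 * k with hn
  have hchoose : n.choose k ≤ 2 ^ n := by
    calc n.choose k ≤ ∑ i ∈ Finset.range (n + 1), n.choose i :=
          Finset.single_le_sum (fun i _ => Nat.zero_le _)
            (Finset.mem_range.mpr (by omega))
      _ = 2 ^ n := Nat.sum_range_choose n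
  have hfacteq : n.choose k * (k.factorial * (ℓ + k).factorial) = n.factorial := by
    have := Nat.choose_mul_factorial_mul_factorial (show k ≤ n by omega)
    have h2 : n - k = ℓ + k := by omega
    rw [h2] at this
    rw [← this]; ring
  have hfact : (n.factorial : ℝ) ≤ 2 ^ n * ((ℓ + k).factorial * k.factorial) := by
    have : n.factorial ≤ 2 ^ n * ((ℓ + k).factorial * k.factorial) := by
      rw [← hfacteq]
      calc n.choose k * (k.factorial * (ℓ + k).factorial)
          ≤ 2 ^ n * (k.factorial * (ℓ + k).factorial) := by
            exact Nat.mul_le_mul_right _ hchoose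
        _ = 2 ^ n * ((ℓ + k).factorial * k.factorial) := by ring
    exact_mod_cast this
  have key : (Real.exp 1 * x) ^ n / n.factorial ≤ Real.exp (Real.exp 1 * x) :=
    pow_div_fact_le_exp _ (by positivity) n
  have hcast : Real.exp 1 * x - ℓ - 2 * k = Real.exp 1 * x - n := by
    push_cast [hn]; ring
  rw [hcast, Real.exp_sub, show ((n:ℝ)) = (n:ℝ) * 1 by ring, Real.exp_nat_mul]
  have hF : (0 : ℝ) < ((ℓ + k).factorial : ℝ) * (k.factorial : ℝ) := by positivity
  have he : (0 : ℝ) < Real.exp 1 ^ n := by positivity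
  rw [div_le_div_iff₀ hF he]
  have hnf : (0 : ℝ) < (n.factorial : ℝ) := by positivity
  have key' : (Real.exp 1 * x) ^ n ≤ Real.exp (Real.exp 1 * x) * n.factorial := by
    rw [div_le_iff₀ hnf] at key; exact key
  calc (x / 2) ^ n * Real.exp 1 ^ n = (Real.exp 1 * x) ^ n / 2 ^ n := by
        rw [mul_pow, div_pow]; ring
    _ ≤ Real.exp (Real.exp 1 * x) * n.factorial / 2 ^ n := by
        apply div_le_div_of_nonneg_right key' (by positivity) |>.trans_eq rfl
    _ ≤ Real.exp (Real.exp 1 * x) * (2 ^ n * ((ℓ + k).factorial * k.factorial)) / 2 ^ n := by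
        gcongr
    _ = Real.exp (Real.exp 1 * x) * (((ℓ + k).factorial : ℝ) * (k.factorial : ℝ)) := by
        field_simp
end

section
/- (Combinatorial core of the O(n + m^{5/3}) butterfly complexity bound.) There exists a constant C > 0 such that for every natural number L, Σ_{ℓ=0}^{L} 4^ℓ · Σ_{k=1}^{4^{L−ℓ}} min( (16:ℝ)^ℓ, (k:ℝ) ) ≤ C · 4^{(5/3)·L}. -/
/-!
With `N = 4 ^ (L - ℓ)`, the inner sum is at most `N * min (16 ^ ℓ) N`, so level `ℓ` contributes
at most `min (4 ^ (L + 2ℓ)) (4 ^ (2L - ℓ))`. The two bounds cross at `ℓ = L / 3`, where both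
equal `4 ^ (5L / 3)`; summing the first below the crossing and the second above it gives two
geometric series, each dominated by its term at the crossing.
-/

open Finset

lemma sum_Icc_min_natCast_le (a : ℝ) (N : ℕ) :
    ∑ k ∈ Icc 1 N, min a (k : ℝ) ≤ N * min a N :=
  calc ∑ k ∈ Icc 1 N, min a (k : ℝ)
      ≤ ∑ _k ∈ Icc 1 N, min a (N : ℝ) :=
        sum_le_sum fun k hk => min_le_min_left a (mod_cast (mem_Icc.mp hk).2)
    _ = N * min a N := by simp

lemma sum_range_min_le_add {M : Type*} [AddCommMonoid M] [LinearOrder M] [IsOrderedAddMonoid M]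
    (f g : ℕ → M) {m n : ℕ} (hmn : m ≤ n) :
    ∑ i ∈ range n, min (f i) (g i) ≤ ∑ i ∈ range m, f i + ∑ i ∈ Ico m n, g i := by
  rw [← sum_range_add_sum_Ico _ hmn]
  exact add_le_add (sum_le_sum fun i _ => min_le_left _ _)
    (sum_le_sum fun i _ => min_le_right _ _)

lemma geom_sum_le_pow_div_sub_one {x : ℝ} (hx : 1 < x) (n : ℕ) :
    ∑ i ∈ range n, x ^ i ≤ x ^ n / (x - 1) := by
  rw [geom_sum_eq hx.ne']
  gcongr
  · linarith

lemma pow_le_rpow_of_natCast_le {b x : ℝ} (hb : 1 ≤ b) {n : ℕ} (h : (n : ℝ) ≤ x) :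
    b ^ n ≤ b ^ x := by
  rw [← Real.rpow_natCast]
  exact Real.rpow_le_rpow_of_exponent_le hb h

lemma level_sum_le (L ℓ : ℕ) (hℓ : ℓ ≤ L) :
    (4 : ℝ) ^ ℓ * ∑ k ∈ Icc (1 : ℕ) (4 ^ (L - ℓ)), min ((16 : ℝ) ^ ℓ) (k : ℝ) ≤
      min (4 ^ L * 16 ^ ℓ) (16 ^ L * (1 / 4) ^ ℓ) := by
  have hN : ((4 ^ (L - ℓ) : ℕ) : ℝ) * 4 ^ ℓ = 4 ^ L := by
    push_cast; rw [← pow_add, Nat.sub_add_cancel hℓ]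
  calc (4 : ℝ) ^ ℓ * ∑ k ∈ Icc (1 : ℕ) (4 ^ (L - ℓ)), min ((16 : ℝ) ^ ℓ) (k : ℝ)
      ≤ 4 ^ ℓ * ((4 ^ (L - ℓ) : ℕ) * min (16 ^ ℓ) ((4 ^ (L - ℓ) : ℕ) : ℝ)) := by
        gcongr; exact sum_Icc_min_natCast_le _ _
    _ = min (4 ^ L * 16 ^ ℓ) (16 ^ L * (1 / 4) ^ ℓ) := by
        rw [← mul_assoc, mul_min_of_nonneg _ _ (by positivity)]
        congr 1
        · rw [mul_comm _ (Nat.cast _ : ℝ), hN]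
        · have : (16 : ℝ) ^ L = 4 ^ L * 4 ^ L := by rw [← mul_pow]; norm_num
          rw [this, ← hN, one_div_pow]
          field_simp

lemma sum_range_min_geom_le (L m : ℕ) (hm : m ≤ L) :
    ∑ ℓ ∈ range (L + 1), min ((4 : ℝ) ^ L * 16 ^ ℓ) (16 ^ L * (1 / 4) ^ ℓ) ≤
      16 / 15 * (4 ^ L * 16 ^ m) + 4 / 3 * (16 ^ L * (1 / 4) ^ (m + 1)) := by
  calc ∑ ℓ ∈ range (L + 1), min ((4 : ℝ) ^ L * 16 ^ ℓ) (16 ^ L * (1 / 4) ^ ℓ)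
      ≤ 4 ^ L * ∑ ℓ ∈ range (m + 1), (16 : ℝ) ^ ℓ +
          16 ^ L * ∑ ℓ ∈ Ico (m + 1) (L + 1), (1 / 4 : ℝ) ^ ℓ := by
        rw [mul_sum, mul_sum]
        exact sum_range_min_le_add _ _ (by omega)
    _ ≤ 4 ^ L * (16 ^ (m + 1) / (16 - 1)) + 16 ^ L * ((1 / 4) ^ (m + 1) / (1 - 1 / 4)) := by
        gcongr
        · exact geom_sum_le_pow_div_sub_one (by norm_num) _
        · exact geom_sum_Ico_le_of_lt_one (by norm_num) (by norm_num)
    _ = 16 / 15 * (4 ^ L * 16 ^ m) + 4 / 3 * (16 ^ L * (1 / 4) ^ (m + 1)) := by ring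

lemma four_pow_mul_sixteen_pow_le_rpow {L m : ℕ} (h : 3 * m ≤ L) :
    (4 : ℝ) ^ L * 16 ^ m ≤ 4 ^ ((5 / 3 : ℝ) * L) := by
  rw [show (16 : ℝ) = 4 ^ 2 by norm_num, ← pow_mul, ← pow_add]
  refine pow_le_rpow_of_natCast_le (by norm_num) ?_
  have : (3 * m : ℝ) ≤ L := mod_cast h
  push_cast
  linarith

lemma sixteen_pow_mul_le_rpow {L m : ℕ} (h : L ≤ 3 * (m + 1)) :
    (16 : ℝ) ^ L * (1 / 4) ^ (m + 1) ≤ 4 ^ ((5 / 3 : ℝ) * L) := by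
  rw [one_div_pow, ← div_eq_mul_one_div, div_le_iff₀ (by positivity),
    show (16 : ℝ) = 4 ^ 2 by norm_num, ← pow_mul, ← Real.rpow_natCast 4 (m + 1),
    ← Real.rpow_add (by norm_num)]
  refine pow_le_rpow_of_natCast_le (by norm_num) ?_
  have : (L : ℝ) ≤ 3 * (m + 1) := mod_cast h
  push_cast
  linarith

theorem stmt16 :
    ∃ C : ℝ, 0 < C ∧
      ∀ L : ℕ,
        ∑ ℓ ∈ Finset.range (L + 1),
            (4 : ℝ) ^ ℓ * ∑ k ∈ Finset.Icc (1 : ℕ) (4 ^ (L - ℓ)), min ((16 : ℝ) ^ ℓ) (k : ℝ) ≤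
          C * (4 : ℝ) ^ ((5 / 3 : ℝ) * (L : ℝ)) := by
  refine ⟨16 / 15 + 4 / 3, by norm_num, fun L => ?_⟩
  calc ∑ ℓ ∈ range (L + 1),
        (4 : ℝ) ^ ℓ * ∑ k ∈ Icc (1 : ℕ) (4 ^ (L - ℓ)), min ((16 : ℝ) ^ ℓ) (k : ℝ)
      ≤ ∑ ℓ ∈ range (L + 1), min ((4 : ℝ) ^ L * 16 ^ ℓ) (16 ^ L * (1 / 4) ^ ℓ) :=
        sum_le_sum fun ℓ hℓ => level_sum_le L ℓ (Nat.lt_succ_iff.mp (mem_range.mp hℓ))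
    _ ≤ 16 / 15 * (4 ^ L * 16 ^ (L / 3)) + 4 / 3 * (16 ^ L * (1 / 4) ^ (L / 3 + 1)) :=
        sum_range_min_geom_le L (L / 3) (Nat.div_le_self L 3)
    _ ≤ 16 / 15 * 4 ^ ((5 / 3 : ℝ) * L) + 4 / 3 * 4 ^ ((5 / 3 : ℝ) * L) := by
        gcongr
        · exact four_pow_mul_sixteen_pow_le_rpow (Nat.mul_div_le L 3)
        · exact sixteen_pow_mul_le_rpow (by omega)
    _ = (16 / 15 + 4 / 3) * 4 ^ ((5 / 3 : ℝ) * L) := by ring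
end

section
/- (Combinatorial core of the O(n + m^{3/2}) butterfly complexity bound under (bR)^{2/3} rank growth.) There exists a constant C > 0 such that for every natural number L, Σ_{ℓ=0}^{L} 4^ℓ · Σ_{k=1}^{4^{L−ℓ}} min( (16:ℝ)^ℓ, (k:ℝ)^{2/3} ) ≤ C · 4^{(3/2)·L}. -/
/-!
Since `min (a ^ 2) (k ^ (2/3)) ≤ a * k ^ (1/3)`, level `ℓ` contributes at most
`4 ^ ((3/2) L - |4ℓ - L| / 6)`: the contributions peak at `ℓ ≈ L / 4` and decay geometrically on
both sides, so the whole sum is at most `8 ^ L * ∑_{j ∈ ℤ} 4 ^ (-|j| / 6)`.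
-/

open Finset Real

lemma min_sq_le_mul {a b : ℝ} (ha : 0 ≤ a) (hb : 0 ≤ b) : min (a ^ 2) (b ^ 2) ≤ a * b := by
  rcases le_total a b with h | h
  · exact (min_le_left _ _).trans (by nlinarith)
  · exact (min_le_right _ _).trans (by nlinarith)

lemma sum_min_sq_rpow_le {a p : ℝ} (ha : 0 ≤ a) (hp : 0 ≤ p) (N : ℕ) :
    ∑ k ∈ Icc 1 N, min (a ^ 2) ((k : ℝ) ^ p) ≤
      N * min (a * (N : ℝ) ^ (p / 2)) ((N : ℝ) ^ p) := by
  have hterm : ∀ k ∈ Icc 1 N,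
      min (a ^ 2) ((k : ℝ) ^ p) ≤ min (a * (N : ℝ) ^ (p / 2)) ((N : ℝ) ^ p) := by
    intro k hk
    have hkN : (k : ℝ) ≤ N := by exact_mod_cast (mem_Icc.1 hk).2
    have hsq : (k : ℝ) ^ p = ((k : ℝ) ^ (p / 2)) ^ 2 := by
      rw [← rpow_natCast, ← rpow_mul k.cast_nonneg]; norm_num
    refine le_min ?_ ((min_le_right _ _).trans (by gcongr))
    rw [hsq]
    exact (min_sq_le_mul ha (by positivity)).trans (by gcongr)
  simpa using sum_le_card_nsmul _ _ _ hterm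

lemma four_pow_mul_sum_min_le {ℓ L : ℕ} (h : ℓ ≤ L) :
    (4 : ℝ) ^ ℓ * ∑ k ∈ Icc (1 : ℕ) (4 ^ (L - ℓ)), min ((16 : ℝ) ^ ℓ) ((k : ℝ) ^ ((2 : ℝ) / 3)) ≤
      (4 : ℝ) ^ ((3 / 2 : ℝ) * L - |4 * (ℓ : ℝ) - L| / 6) := by
  set N : ℕ := 4 ^ (L - ℓ)
  have h16 : (16 : ℝ) ^ ℓ = ((4 : ℝ) ^ ℓ) ^ 2 := by rw [← pow_mul, mul_comm, pow_mul]; norm_num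
  have hN : (N : ℝ) = (4 : ℝ) ^ ((L : ℝ) - ℓ) := by
    rw [← Nat.cast_sub h, rpow_natCast]; push_cast [N]; rfl
  calc _ ≤ (4 : ℝ) ^ ℓ *
          (N * min ((4 : ℝ) ^ ℓ * (N : ℝ) ^ ((2 : ℝ) / 3 / 2)) ((N : ℝ) ^ ((2 : ℝ) / 3))) := by
        rw [h16]; gcongr; exact sum_min_sq_rpow_le (by positivity) (by norm_num) N
    _ = min ((4 : ℝ) ^ ((4 / 3 : ℝ) * L + 2 / 3 * ℓ))
          ((4 : ℝ) ^ ((5 / 3 : ℝ) * L - 2 / 3 * ℓ)) := by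
        simp only [hN, ← rpow_natCast, ← rpow_mul (show (0 : ℝ) ≤ 4 by norm_num),
          mul_min_of_nonneg _ _ (rpow_nonneg (show (0 : ℝ) ≤ 4 by norm_num) _),
          ← rpow_add (show (0 : ℝ) < 4 by norm_num)]
        congr 2 <;> ring
    _ ≤ _ := by
        rcases le_total (4 * (ℓ : ℝ)) L with h' | h'
        · refine (min_le_left _ _).trans (rpow_le_rpow_of_exponent_le (by norm_num) ?_)
          rw [abs_of_nonpos (by linarith)]; linarith
        · refine (min_le_right _ _).trans (rpow_le_rpow_of_exponent_le (by norm_num) ?_)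
          rw [abs_of_nonneg (by linarith)]; linarith

lemma summable_rpow_neg_abs_div {b c : ℝ} (hb : 1 < b) (hc : 0 < c) :
    Summable fun j : ℤ => b ^ (-(|(j : ℝ)| / c)) := by
  have hgeom : ∀ n : ℕ, b ^ (-((n : ℝ) / c)) = (b ^ (-(1 / c))) ^ n := by
    intro n
    rw [← rpow_natCast, ← rpow_mul (by linarith)]
    ring_nf
  have hr : b ^ (-(1 / c)) < 1 := rpow_lt_one_of_one_lt_of_neg hb (by simpa using hc)
  have hnat : Summable fun n : ℕ => b ^ (-((n : ℝ) / c)) := by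
    simp_rw [hgeom]
    exact summable_geometric_of_lt_one (by positivity) hr
  exact Summable.of_nat_of_neg (by simpa using hnat) (by simpa using hnat)

theorem stmt17 :
    ∃ C : ℝ, 0 < C ∧
      ∀ L : ℕ,
        ∑ ℓ ∈ Finset.range (L + 1),
            (4 : ℝ) ^ ℓ *
              ∑ k ∈ Finset.Icc (1 : ℕ) (4 ^ (L - ℓ)),
                min ((16 : ℝ) ^ ℓ) ((k : ℝ) ^ ((2 : ℝ) / 3)) ≤
          C * (4 : ℝ) ^ ((3 / 2 : ℝ) * (L : ℝ)) := by
  set f : ℤ → ℝ := fun j => (4 : ℝ) ^ (-(|(j : ℝ)| / 6))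
  have hf : Summable f := summable_rpow_neg_abs_div (by norm_num) (by norm_num)
  have hf0 : ∀ j, 0 ≤ f j := fun j => by positivity
  refine ⟨∑' j, f j, hf.tsum_pos hf0 0 (by simp [f]), fun L => ?_⟩
  have hinj : Set.InjOn (fun ℓ : ℕ => 4 * (ℓ : ℤ) - L) (range (L + 1)) :=
    fun a _ b _ hab => by simpa using hab
  calc _ ≤ ∑ ℓ ∈ range (L + 1), (4 : ℝ) ^ ((3 / 2 : ℝ) * L) * f (4 * ℓ - L) := by
        refine sum_le_sum fun ℓ hℓ =>
          (four_pow_mul_sum_min_le (by simpa [Nat.lt_succ_iff] using hℓ)).trans_eq ?_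
        simp only [f, ← rpow_add (show (0 : ℝ) < 4 by norm_num)]
        push_cast
        ring_nf
    _ = (4 : ℝ) ^ ((3 / 2 : ℝ) * L) *
          ∑ j ∈ (range (L + 1)).image (fun ℓ : ℕ => 4 * (ℓ : ℤ) - L), f j := by
        rw [← mul_sum, sum_image hinj]
    _ ≤ _ := by
        rw [mul_comm]
        gcongr
        exact hf.sum_le_tsum _ fun j _ => hf0 j
end
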